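/- arXiv:2504.16863 — 3 statements merged into one kernel-verified Lean document; each statement's English description precedes it below -/
import Mathlib

section
/- Let G be a graph and let x, y be vertices of G. Then x and y are true twins (i.e., N[x] = N[y]) if and only if for every maximal clique K of G, x ∈ K if and only if y ∈ K. -/
variable {V : Type} {W : Type}

/-- Two vertices are true twins: they have the same closed neighbourhood. -/
def twin (G : SimpleGraph V) (x y : V) : Prop :=
  ∀ z, (G.Adj x z ∨ x = z) ↔ (G.Adj y z ∨ y = z)

/-- The true-twin relation as a setoid. -/
def twinSetoid (G : SimpleGraph V) : Setoid V :=
  ⟨twin G, ⟨fun _ _ => Iff.rfl, fun h z => (h z).symm, fun h1 h2 z => (h1 z).trans (h2 z)⟩⟩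

/-- The quotient of `G` by the true-twin relation. -/
def quotGraph (G : SimpleGraph V) : SimpleGraph (Quotient (twinSetoid G)) where
  Adj a b := a ≠ b ∧ ∃ x y, Quotient.mk (twinSetoid G) x = a ∧
    Quotient.mk (twinSetoid G) y = b ∧ G.Adj x y
  symm := ⟨by
    rintro a b ⟨h, x, y, hx, hy, hxy⟩
    exact ⟨h.symm, y, x, hy, hx, hxy.symm⟩⟩
  loopless := ⟨by rintro a ⟨h, _⟩; exact h rfl⟩

/-- The true-twin class of a vertex. -/
def qmk (G : SimpleGraph V) (v : V) : Quotient (twinSetoid G) :=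
  Quotient.mk (twinSetoid G) v

/-- `K` is a maximal clique of `G`. -/
def MaxClique (G : SimpleGraph V) (K : Set V) : Prop :=
  G.IsClique K ∧ ∀ K', G.IsClique K' → K ⊆ K' → K' = K

/-- `S` is an independent set of `G`. -/
def IndepSet (G : SimpleGraph V) (S : Set V) : Prop :=
  ∀ x ∈ S, ∀ y ∈ S, ¬ G.Adj x y

/-- Independence number. -/
noncomputable def indepNum (G : SimpleGraph V) : ℕ :=
  sSup {n | ∃ S : Set V, IndepSet G S ∧ S.ncard = n}

/-- Clique cover number: minimum number of cliques covering all vertices. -/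
noncomputable def cliqueCoverNum (G : SimpleGraph V) : ℕ :=
  sInf {n | ∃ f : Fin n → Set V, (∀ i, G.IsClique (f i)) ∧ ∀ v, ∃ i, v ∈ f i}

/-- Closed neighbourhood. -/
def cNbhd (G : SimpleGraph V) (v : V) : Set V := insert v (G.neighborSet v)

/-- Local independence number. -/
noncomputable def alphaLoc (G : SimpleGraph V) : ℕ :=
  sSup {n | ∃ v, ∃ S ⊆ cNbhd G v, IndepSet G S ∧ S.ncard = n}

/-- Local clique cover number. -/
noncomputable def thetaLoc (G : SimpleGraph V) : ℕ :=
  sSup {n | ∃ v, cliqueCoverNum (G.induce (cNbhd G v)) = n}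

/-- Clique-incidence-degree: max number of maximal cliques containing a vertex. -/
noncomputable def cideg (G : SimpleGraph V) : ℕ :=
  sSup {n | ∃ v, {K | MaxClique G K ∧ v ∈ K}.ncard = n}

/-- Clique-incidence-diversity: max number of true-twin classes meeting a maximal clique. -/
noncomputable def cliqueIncDiv (G : SimpleGraph V) : ℕ :=
  sSup {n | ∃ K, MaxClique G K ∧ (qmk G '' K).ncard = n}

/-- Clique-degree: max number of other maximal cliques intersecting a maximal clique. -/
noncomputable def cdeg (G : SimpleGraph V) : ℕ :=
  sSup {n | ∃ K, MaxClique G K ∧ {K' | MaxClique G K' ∧ K' ≠ K ∧ (K' ∩ K).Nonempty}.ncard = n}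

/-- Maximum degree. -/
noncomputable def maxDeg (H : SimpleGraph W) : ℕ :=
  sSup {n | ∃ v, (H.neighborSet v).ncard = n}

/-- Clique number. -/
noncomputable def cliqueNum (H : SimpleGraph W) : ℕ :=
  sSup {n | ∃ K : Set W, H.IsClique K ∧ K.ncard = n}

/-- A separation of a graph. -/
def IsSep (H : SimpleGraph W) (A B : Set W) : Prop :=
  A ∪ B = Set.univ ∧ ∀ a ∈ A \ B, ∀ b ∈ B \ A, ¬ H.Adj a b

/-- A tree-decomposition. -/
structure TreeDec {ι : Type} (G : SimpleGraph V) (T : SimpleGraph ι) (β : ι → Set V) : Prop where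
  tree : T.IsTree
  cover : ∀ v, ∃ t, v ∈ β t
  edges : ∀ v w, G.Adj v w → ∃ t, v ∈ β t ∧ w ∈ β t
  subtree : ∀ v, (T.induce {t | v ∈ β t}).Connected

/-- α-treewidth (tree-independence number). -/
noncomputable def alphaTW (G : SimpleGraph V) : ℕ :=
  sInf {n | ∃ (ι : Type) (T : SimpleGraph ι) (β : ι → Set V), TreeDec G T β ∧
    ∀ t, ∀ S ⊆ β t, IndepSet G S → S.ncard ≤ n}

/-- Neighbourhood of a set of vertices (outside the set). -/
def setNbhd (G : SimpleGraph V) (K : Set V) : Set V :=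
  {v | v ∉ K ∧ ∃ x ∈ K, G.Adj v x}

/-- Diversity number of a set `K`: max size of a `K`-diverse set of neighbours. -/
noncomputable def dn (G : SimpleGraph V) (K : Set V) : ℕ :=
  sSup {n | ∃ Y ⊆ setNbhd G K,
    (∀ y1 ∈ Y, ∀ y2 ∈ Y, y1 ≠ y2 → G.neighborSet y1 ∩ K ≠ G.neighborSet y2 ∩ K) ∧ Y.ncard = n}

/-- Cutrank of a set of vertices: F₂-rank of the corresponding submatrix
of the adjacency matrix. -/
noncomputable def cutrank (G : SimpleGraph V) [Fintype V] (X : Set V) : ℕ :=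
  haveI : DecidableRel G.Adj := Classical.decRel _
  haveI : Fintype ↥X := Fintype.ofFinite _
  haveI : Fintype ↥(Xᶜ) := Fintype.ofFinite _
  (Matrix.of fun (x : ↥X) (y : ↥(Xᶜ)) => if G.Adj x.1 y.1 then (1 : ZMod 2) else 0).rank

/-- `G` admits a rank-decomposition of width at most `w`: a tree whose internal
nodes have degree 3, whose leaves are in bijection with `V(G)`, such that every
edge induces a bipartition of the vertices of cutrank at most `w`. -/
def HasRankDecompOfWidth (G : SimpleGraph V) [Fintype V] (w : ℕ) : Prop :=
  ∃ (ι : Type) (T : SimpleGraph ι) (δ : V → ι),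
    T.IsTree ∧ Function.Injective δ ∧
    (∀ t, (T.neighborSet t).ncard = 1 ↔ ∃ v, δ v = t) ∧
    (∀ t, (T.neighborSet t).ncard = 1 ∨ (T.neighborSet t).ncard = 3) ∧
    ∀ a b, T.Adj a b → cutrank G {v | (T.deleteEdges {s(a,b)}).Reachable (δ v) a} ≤ w

/-- An injective enumeration of a path that is induced in `G`. -/
def IsInducedPath (G : SimpleGraph V) {ℓ : ℕ} (x : Fin ℓ → V) : Prop :=
  Function.Injective x ∧ ∀ i j, G.Adj (x i) (x j) ↔ (i.val + 1 = j.val ∨ j.val + 1 = i.val)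

section MaximalCliques

open SimpleGraph

variable {G : SimpleGraph V}

theorem maxClique_iff_maximal {K : Set V} : MaxClique G K ↔ Maximal G.IsClique K :=
  and_congr_right fun _ =>
    ⟨fun h K' hK' hKK' => (h K' hK' hKK').le, fun h _ hK' hKK' => (h hK' hKK').antisymm hKK'⟩

theorem SimpleGraph.IsClique.exists_maxClique_superset {C : Set V} (hC : G.IsClique C) :
    ∃ K, MaxClique G K ∧ C ⊆ K := by
  obtain ⟨K, hCK, hK⟩ := zorn_subset_nonempty {K : Set V | G.IsClique K}
    (fun c hc hchain _ => ⟨⋃₀ c, (isClique_sUnion hchain.directedOn).2 hc,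
      fun _ => Set.subset_sUnion_of_mem⟩) C hC
  exact ⟨K, maxClique_iff_maximal.2 hK, hCK⟩

theorem twin.symm {x y : V} (h : twin G x y) : twin G y x := fun z => (h z).symm

theorem twin.mem_of_mem_maxClique {x y : V} (h : twin G x y) {K : Set V} (hK : MaxClique G K)
    (hx : x ∈ K) : y ∈ K := by
  refine (maxClique_iff_maximal.1 hK).mem_of_prop_insert (hK.1.insert fun z hz hyz => ?_)
  have hxz : G.Adj x z ∨ x = z := (eq_or_ne x z).symm.imp_left (hK.1 hx hz)
  exact ((h z).1 hxz).resolve_right hyz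

theorem adj_or_eq_of_forall_maxClique {x y z : V} (h : ∀ K, MaxClique G K → x ∈ K → y ∈ K)
    (hxz : G.Adj x z ∨ x = z) : G.Adj y z ∨ y = z := by
  obtain ⟨K, hK, hxzK⟩ :=
    (isClique_pair.2 hxz.resolve_right : G.IsClique {x, z}).exists_maxClique_superset
  have hyK : y ∈ K := h K hK (hxzK (Set.mem_insert x {z}))
  exact (eq_or_ne y z).symm.imp_left (hK.1 hyK (hxzK (Set.mem_insert_of_mem x rfl)))

end MaximalCliques

theorem stmt0_general (G : SimpleGraph V) (x y : V) :
    twin G x y ↔ ∀ K : Set V, MaxClique G K → (x ∈ K ↔ y ∈ K) :=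
  ⟨fun h _ hK => ⟨h.mem_of_mem_maxClique hK, h.symm.mem_of_mem_maxClique hK⟩,
    fun h _ => ⟨adj_or_eq_of_forall_maxClique fun K hK => (h K hK).1,
      adj_or_eq_of_forall_maxClique fun K hK => (h K hK).2⟩⟩

theorem stmt0 [Fintype V] (G : SimpleGraph V) (x y : V) :
    twin G x y ↔ ∀ K : Set V, MaxClique G K → (x ∈ K ↔ y ∈ K) :=
  stmt0_general G x y
end

section
/- For every graph G, the clique-incidence-degree of G satisfies cideg(G) ≤ 3^{⌈Δ(G̃)/3⌉}, where G̃ is the quotient of G by the true-twin relation. -/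
variable {V : Type} {W : Type}

/-!
A maximal clique of `G` is a union of true-twin classes, so the maximal cliques of `G` through `v`
inject into those of `G̃` through the class of `v`, and these into the maximal cliques of the
neighbourhood of that class, which has at most `Δ(G̃)` vertices.

Moon–Moser is proved in the form `m(H) ^ 3 ≤ 3 ^ |H|`, where `m` counts maximal cliques. If `v` has
maximum degree `d`, every maximal clique meets the `|H| - d` non-neighbours of `v` (otherwise `v`
could be added), and the maximal cliques through `u` correspond to those of the neighbourhood of
`u`, of size at most `d`. Hence `m(H) ≤ (|H| - d) · b` with `b ^ 3 ≤ 3 ^ d`, and `k ^ 3 ≤ 3 ^ k`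
closes the induction.
-/

lemma cube_le_three_pow (k : ℕ) : k ^ 3 ≤ 3 ^ k := by
  rcases lt_or_ge k 3 with hk | hk
  · interval_cases k <;> norm_num
  · induction k, hk using Nat.le_induction with
    | base => norm_num
    | succ k hk ih =>
      calc (k + 1) ^ 3 ≤ 3 * k ^ 3 := by nlinarith [sq_nonneg (k - 3 : ℤ)]
        _ ≤ 3 * 3 ^ k := Nat.mul_le_mul_left 3 ih
        _ = 3 ^ (k + 1) := (pow_succ' 3 k).symm

lemma pow_three_le_three_pow_add_of_le_mul {c k b d : ℕ} (hc : c ≤ k * b) (hb : b ^ 3 ≤ 3 ^ d) :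
    c ^ 3 ≤ 3 ^ (k + d) :=
  calc c ^ 3 ≤ (k * b) ^ 3 := Nat.pow_le_pow_left hc 3
    _ = k ^ 3 * b ^ 3 := mul_pow k b 3
    _ ≤ 3 ^ k * 3 ^ d := Nat.mul_le_mul (cube_le_three_pow k) hb
    _ = 3 ^ (k + d) := (pow_add 3 k d).symm

lemma le_three_pow_ceil_div_three {c n : ℕ} (h : c ^ 3 ≤ 3 ^ n) : c ≤ 3 ^ ((n + 2) / 3) := by
  refine (Nat.pow_le_pow_iff_left (by norm_num : 3 ≠ 0)).1 (h.trans ?_)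
  rw [← pow_mul]
  exact Nat.pow_le_pow_right (by norm_num) (by omega)

section MaxDeg

variable [Finite V] (G : SimpleGraph V)

lemma ncard_neighborSet_le_maxDeg (v : V) : (G.neighborSet v).ncard ≤ maxDeg G :=
  le_csSup ⟨Nat.card V, by rintro _ ⟨u, rfl⟩; exact Set.ncard_le_card _⟩ ⟨v, rfl⟩

lemma exists_ncard_neighborSet_eq_maxDeg [Nonempty V] : ∃ v, (G.neighborSet v).ncard = maxDeg G :=
  Nat.sSup_mem (Set.range_nonempty _) ⟨Nat.card V, by rintro _ ⟨u, rfl⟩; exact Set.ncard_le_card _⟩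

end MaxDeg

section MaxClique

variable {G : SimpleGraph V} {K : Set V}

lemma MaxClique.mem_of_forall_adj (hK : MaxClique G K) {x : V} (hx : ∀ y ∈ K, x ≠ y → G.Adj x y) :
    x ∈ K :=
  hK.2 _ (hK.1.insert hx) (Set.subset_insert x K) ▸ Set.mem_insert x K

lemma MaxClique.exists_mem_notMem_neighborSet (hK : MaxClique G K) (v : V) :
    ∃ u ∈ K, u ∉ G.neighborSet v := by
  by_contra! hsub
  exact G.notMem_neighborSet_self (hsub v (hK.mem_of_forall_adj fun y hy _ => hsub y hy))

lemma MaxClique.eq_insert_image_preimage (hK : MaxClique G K) {u : V} (hu : u ∈ K) :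
    K = insert u (Subtype.val '' (Subtype.val ⁻¹' K : Set (G.neighborSet u))) := by
  ext x
  rcases eq_or_ne x u with rfl | hxu
  · simp [hu]
  · constructor
    · exact fun hx => Or.inr ⟨⟨x, hK.1 hu hx hxu.symm⟩, hx, rfl⟩
    · rintro (rfl | ⟨y, hy, rfl⟩)
      exacts [hu, hy]

lemma MaxClique.preimage_neighborSet (hK : MaxClique G K) {u : V} (hu : u ∈ K) :
    MaxClique (G.induce (G.neighborSet u)) (Subtype.val ⁻¹' K) := by
  refine ⟨fun a ha b hb hab => hK.1 ha hb (Subtype.val_injective.ne hab), fun K' hK' hsub => ?_⟩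
  have hclique : G.IsClique (insert u (Subtype.val '' K')) := by
    refine SimpleGraph.IsClique.insert ?_ ?_
    · rintro _ ⟨a, ha, rfl⟩ _ ⟨b, hb, rfl⟩ hab
      exact hK' ha hb (ne_of_apply_ne _ hab)
    · rintro _ ⟨y, -, rfl⟩ -
      exact y.2
  have hKsub : K ⊆ insert u (Subtype.val '' K') := by
    rw [hK.eq_insert_image_preimage hu]
    exact Set.insert_subset_insert (Set.image_mono hsub)
  refine hsub.antisymm' fun x hx => ?_
  rw [Set.mem_preimage, ← hK.2 _ hclique hKsub]
  exact Set.mem_insert_of_mem _ ⟨x, hx, rfl⟩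

end MaxClique

lemma ncard_maxClique_mem_le [Finite V] (G : SimpleGraph V) (u : V) :
    {K | MaxClique G K ∧ u ∈ K}.ncard ≤
      {K | MaxClique (G.induce (G.neighborSet u)) K}.ncard := by
  refine Set.ncard_le_ncard_of_injOn (fun K => Subtype.val ⁻¹' K)
    (fun K ⟨hK, hu⟩ => hK.preimage_neighborSet hu) ?_
  rintro K₁ ⟨hK₁, hu₁⟩ K₂ ⟨hK₂, hu₂⟩ h
  rw [hK₁.eq_insert_image_preimage hu₁, hK₂.eq_insert_image_preimage hu₂]
  simp only at h
  rw [h]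

theorem ncard_maxClique_pow_three_le [Finite V] (G : SimpleGraph V) :
    {K | MaxClique G K}.ncard ^ 3 ≤ 3 ^ Nat.card V := by
  induction hn : Nat.card V using Nat.strong_induction_on generalizing V with
  | _ n ih =>
  rcases isEmpty_or_nonempty V with _ | _
  · calc _ ≤ 1 ^ 3 := Nat.pow_le_pow_left (Set.ncard_le_one_of_subsingleton _) 3
      _ ≤ 3 ^ n := Nat.one_le_pow _ _ (by norm_num)
  classical
  have : Fintype V := Fintype.ofFinite V
  obtain ⟨v, hv⟩ := exists_ncard_neighborSet_eq_maxDeg G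
  set M := (G.neighborSet v)ᶜ.toFinset
  set S := fun u => {K | MaxClique G K ∧ u ∈ K}
  obtain ⟨u₀, -, hu₀⟩ := M.exists_max_image (fun u => (S u).ncard) ⟨v, by simp [M]⟩
  have hcover : {K | MaxClique G K} ⊆ ⋃ u ∈ M, S u := fun K hK => by
    obtain ⟨u, huK, hu⟩ := hK.exists_mem_notMem_neighborSet v
    exact Set.mem_biUnion (by simpa [M] using hu) ⟨hK, huK⟩
  have hcount : {K | MaxClique G K}.ncard ≤ M.card * (S u₀).ncard :=
    calc _ ≤ (⋃ u ∈ M, S u).ncard := Set.ncard_le_ncard hcover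
      _ ≤ ∑ u ∈ M, (S u).ncard := M.set_ncard_biUnion_le S
      _ ≤ M.card • (S u₀).ncard := M.sum_le_card_nsmul _ _ hu₀
  have hdeg : (G.neighborSet u₀).ncard < n :=
    hn ▸ Set.ncard_lt_card fun h => G.notMem_neighborSet_self (h ▸ Set.mem_univ u₀)
  have hS : (S u₀).ncard ^ 3 ≤ 3 ^ maxDeg G :=
    calc _ ≤ {K | MaxClique (G.induce (G.neighborSet u₀)) K}.ncard ^ 3 :=
          Nat.pow_le_pow_left (ncard_maxClique_mem_le G u₀) 3
      _ ≤ 3 ^ (G.neighborSet u₀).ncard := ih _ hdeg _ (Nat.card_coe_set_eq _)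
      _ ≤ 3 ^ maxDeg G := Nat.pow_le_pow_right (by norm_num) (ncard_neighborSet_le_maxDeg G u₀)
  have hM : M.card + maxDeg G = n := by
    have := Set.ncard_le_card (G.neighborSet v)
    rw [← Set.ncard_eq_toFinset_card', Set.ncard_compl, ← hv, ← hn]
    omega
  exact hM ▸ pow_three_le_three_pow_add_of_le_mul hcount hS

lemma ncard_maxClique_mem_pow_three_le [Finite V] (G : SimpleGraph V) (u : V) :
    {K | MaxClique G K ∧ u ∈ K}.ncard ^ 3 ≤ 3 ^ (G.neighborSet u).ncard :=
  calc _ ≤ {K | MaxClique (G.induce (G.neighborSet u)) K}.ncard ^ 3 :=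
        Nat.pow_le_pow_left (ncard_maxClique_mem_le G u) 3
    _ ≤ 3 ^ (G.neighborSet u).ncard :=
        Nat.card_coe_set_eq (G.neighborSet u) ▸ ncard_maxClique_pow_three_le _

section Twin

variable {G : SimpleGraph V} {x y z : V}

lemma twin.adj (h : twin G x y) (hxy : x ≠ y) : G.Adj x y :=
  ((h y).2 (Or.inr rfl)).resolve_right hxy

lemma twin.adj_of_adj (h : twin G x y) (hxz : G.Adj x z) (hyz : y ≠ z) : G.Adj y z :=
  ((h z).1 (Or.inl hxz)).resolve_right hyz

lemma MaxClique.mem_of_twin {K : Set V} (hK : MaxClique G K) (hx : x ∈ K) (h : twin G x y) :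
    y ∈ K := by
  rcases eq_or_ne x y with rfl | hxy
  · exact hx
  refine hK.mem_of_forall_adj fun z hz hyz => ?_
  rcases eq_or_ne x z with rfl | hxz
  · exact (h.adj hxy).symm
  · exact h.adj_of_adj (hK.1 hx hz hxz) hyz

lemma MaxClique.preimage_image_qmk {K : Set V} (hK : MaxClique G K) :
    qmk G ⁻¹' (qmk G '' K) = K :=
  (Set.subset_preimage_image _ _).antisymm' fun _ ⟨_, hy, hyx⟩ =>
    hK.mem_of_twin hy (Quotient.exact hyx)

lemma isClique_preimage_qmk {K : Set (Quotient (twinSetoid G))}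
    (hK : (quotGraph G).IsClique K) : G.IsClique (qmk G ⁻¹' K) := by
  intro x hx y hy hxy
  by_cases hq : qmk G x = qmk G y
  · exact (Quotient.exact hq : twin G x y).adj hxy
  obtain ⟨-, x', y', hx', hy', hadj⟩ := hK hx hy hq
  have hxy' : G.Adj x y' := (Quotient.exact hx').adj_of_adj hadj (by rintro rfl; exact hq hy')
  exact ((Quotient.exact hy').adj_of_adj hxy'.symm hxy.symm).symm

lemma MaxClique.image_qmk {K : Set V} (hK : MaxClique G K) :
    MaxClique (quotGraph G) (qmk G '' K) := by
  refine ⟨?_, fun K' hK' hsub => ?_⟩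
  · rintro _ ⟨x, hx, rfl⟩ _ ⟨y, hy, rfl⟩ hne
    exact ⟨hne, x, y, rfl, rfl, hK.1 hx hy (ne_of_apply_ne _ hne)⟩
  · have hpre : qmk G ⁻¹' K' = K :=
      hK.2 _ (isClique_preimage_qmk hK') (Set.image_subset_iff.1 hsub)
    rw [← hpre]
    exact (Set.image_preimage_eq K' Quotient.mk_surjective).symm

end Twin

lemma ncard_maxClique_mem_le_quotGraph [Finite V] (G : SimpleGraph V) (v : V) :
    {K | MaxClique G K ∧ v ∈ K}.ncard ≤
      {K | MaxClique (quotGraph G) K ∧ qmk G v ∈ K}.ncard := by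
  refine Set.ncard_le_ncard_of_injOn (qmk G '' ·) (fun K ⟨hK, hv⟩ => ⟨hK.image_qmk, v, hv, rfl⟩) ?_
  rintro K₁ ⟨hK₁, -⟩ K₂ ⟨hK₂, -⟩ h
  rw [← hK₁.preimage_image_qmk, ← hK₂.preimage_image_qmk]
  simp only at h
  rw [h]

theorem stmt8 [Fintype V] (G : SimpleGraph V) :
    cideg G ≤ 3 ^ ((maxDeg (quotGraph G) + 2) / 3) := by
  refine csSup_le' ?_
  rintro _ ⟨v, rfl⟩
  refine le_three_pow_ceil_div_three ?_
  calc _ ≤ {K | MaxClique (quotGraph G) K ∧ qmk G v ∈ K}.ncard ^ 3 :=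
        Nat.pow_le_pow_left (ncard_maxClique_mem_le_quotGraph G v) 3
    _ ≤ 3 ^ ((quotGraph G).neighborSet (qmk G v)).ncard :=
        ncard_maxClique_mem_pow_three_le _ _
    _ ≤ 3 ^ maxDeg (quotGraph G) :=
        Nat.pow_le_pow_right (by norm_num) (ncard_neighborSet_le_maxDeg _ _)
end

section
/- Let d, k be positive integers and let G be a graph whose local independence number is at most d and whose rankwidth is at most k. Then the α-treewidth (tree-independence number) of G is at most 3dk. -/
variable {V : Type} {W : Type}

/-!
Take as bag of a node `t` of the rank-decomposition tree `T` the vertices `v` having a closed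
neighbour `w` such that `t` lies on the `T`-path between the leaves of `v` and `w`; this gives a
tree-decomposition on `T`. A leaf bag lies in the closed neighbourhood of the leaf's vertex. At an
internal node `t`, every `v` in the bag has a neighbour across one of the three edges at `t`, namely
the edge through which the path from the leaf of `v` leaves `t`. For each such edge, the columns of
a basis of the column space of its cut matrix over `𝔽₂` give at most `k` vertices dominating every
vertex on the near side that has a neighbour across.
So every bag is covered by `3k` closed neighbourhoods, each of which meets an independent set in at
most `d` vertices.
-/

open SimpleGraph in
lemma SimpleGraph.IsAcyclic.exists_adj_deleteEdges_separating {ι : Type*} {T : SimpleGraph ι}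
    (hT : T.IsAcyclic) {x y t : ι} {p : T.Walk x y} (hp : p.IsTrail) (ht : t ∈ p.support)
    (htx : t ≠ x) :
    ∃ a, T.Adj t a ∧ (T.deleteEdges {s(a, t)}).Reachable x a ∧
      ¬ (T.deleteEdges {s(a, t)}).Reachable y a := by
  classical
  obtain ⟨a, hta, r, hr⟩ :=
    Walk.not_nil_iff.mp (Walk.not_nil_of_ne htx : ¬ (p.takeUntil t ht).reverse.Nil)
  have hr_trail : (Walk.cons hta r).IsTrail := hr ▸ (hp.takeUntil ht).reverse
  have hat : s(a, t) ∈ (p.takeUntil t ht).edges := by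
    rw [← List.mem_reverse, ← Walk.edges_reverse, hr, Walk.edges_cons, Sym2.eq_swap]
    exact List.mem_cons_self
  have hxa : (T.deleteEdges {s(a, t)}).Reachable x a :=
    ⟨(r.toDeleteEdges _ (by
      rintro e he rfl; exact ((Walk.isTrail_cons _ _).mp hr_trail).2 (Sym2.eq_swap ▸ he))).reverse⟩
  have hty : (T.deleteEdges {s(a, t)}).Reachable t y :=
    ⟨(p.dropUntil t ht).toDeleteEdges _ (by
      rintro e he rfl; exact hp.disjoint_edges_takeUntil_dropUntil ht hat he)⟩
  have hbridge : ¬ (T.deleteEdges {s(a, t)}).Reachable t a := by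
    rw [Sym2.eq_swap]
    exact isBridge_iff.mp (isAcyclic_iff_forall_isBridge.mp hT (T.mem_edgeSet.mpr hta))
  exact ⟨a, hta, hxa, fun hya => hbridge (hty.trans hya)⟩

lemma Matrix.exists_card_le_rank_forall_ne_zero {m n K : Type*} [Fintype n] [Field K]
    (A : Matrix m n K) :
    ∃ s : Finset n, s.card ≤ A.rank ∧ ∀ i j, A i j ≠ 0 → ∃ j' ∈ s, A i j' ≠ 0 := by
  classical
  obtain ⟨κ, a, ha, hspan, hli⟩ := exists_linearIndependent' K A.col
  have : Fintype κ := Fintype.ofInjective a ha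
  refine ⟨Finset.univ.image a, ?_, fun i j hij => ?_⟩
  · rw [Finset.card_image_of_injective _ ha, Finset.card_univ, ← finrank_span_eq_card hli,
      hspan, A.rank_eq_finrank_span_cols]
  by_contra! h
  have hker : Set.range (A.col ∘ a) ⊆ LinearMap.ker (LinearMap.proj i : (m → K) →ₗ[K] K) := by
    rintro _ ⟨c, rfl⟩
    exact h (a c) (by simp)
  have hj : A.col j ∈ Submodule.span K (Set.range (A.col ∘ a)) :=
    hspan ▸ Submodule.subset_span ⟨j, rfl⟩
  have := Submodule.span_le.mpr hker hj
  exact hij (by simpa using this)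

lemma exists_card_le_cutrank [Fintype V] (G : SimpleGraph V) (X : Set V) :
    ∃ Y : Finset V, Y.card ≤ cutrank G X ∧
      ∀ v ∈ X, ∀ w ∉ X, G.Adj v w → ∃ y ∈ Y, G.Adj v y := by
  let _ : DecidableRel G.Adj := Classical.decRel _
  let _ : Fintype ↥(Xᶜ) := Fintype.ofFinite _
  obtain ⟨s, hs, hcov⟩ := Matrix.exists_card_le_rank_forall_ne_zero
    (Matrix.of fun (x : ↥X) (y : ↥(Xᶜ)) => if G.Adj x.1 y.1 then (1 : ZMod 2) else 0)
  refine ⟨s.map (Function.Embedding.subtype _), (Finset.card_map _).trans_le hs, ?_⟩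
  intro v hv w hw hvw
  obtain ⟨y, hy, hne⟩ := hcov ⟨v, hv⟩ ⟨w, hw⟩ (by simp [hvw])
  exact ⟨y, Finset.mem_map_of_mem _ hy, by by_contra h; simp [h] at hne⟩

lemma mem_cNbhd_comm {G : SimpleGraph V} {v w : V} : w ∈ cNbhd G v ↔ v ∈ cNbhd G w := by
  simp only [cNbhd, Set.mem_insert_iff, SimpleGraph.mem_neighborSet, G.adj_comm, eq_comm]

lemma IndepSet.mono {G : SimpleGraph V} {S S' : Set V} (hS : IndepSet G S) (h : S' ⊆ S) :
    IndepSet G S' :=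
  fun x hx y hy => hS x (h hx) y (h hy)

lemma IndepSet.ncard_le_alphaLoc [Finite V] {G : SimpleGraph V} {S : Set V} (hS : IndepSet G S)
    {v : V} (hSv : S ⊆ cNbhd G v) : S.ncard ≤ alphaLoc G :=
  le_csSup ⟨Nat.card V, by rintro _ ⟨-, S', -, -, rfl⟩; exact Set.ncard_le_card S'⟩
    ⟨v, S, hSv, hS, rfl⟩

lemma IndepSet.ncard_le_of_subset_biUnion [Fintype V] {G : SimpleGraph V} {S : Set V}
    (hS : IndepSet G S) (Y : Finset V) (hSY : S ⊆ ⋃ y ∈ Y, cNbhd G y) :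
    S.ncard ≤ Y.card * alphaLoc G := by
  classical
  calc S.ncard = S.toFinset.card := Set.ncard_eq_toFinset_card' S
    _ ≤ (Y.biUnion fun y => (S ∩ cNbhd G y).toFinset).card := by
      refine Finset.card_le_card fun v hv => ?_
      obtain ⟨y, hy, hvy⟩ := Set.mem_iUnion₂.mp (hSY (Set.mem_toFinset.mp hv))
      exact Finset.mem_biUnion.mpr ⟨y, hy, Set.mem_toFinset.mpr ⟨Set.mem_toFinset.mp hv, hvy⟩⟩
    _ ≤ Y.card * alphaLoc G := by
      refine Finset.card_biUnion_le_card_mul _ _ _ fun y _ => ?_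
      rw [← Set.ncard_eq_toFinset_card']
      exact (hS.mono Set.inter_subset_left).ncard_le_alphaLoc Set.inter_subset_right

section PathBag

variable {ι : Type} (G : SimpleGraph V) (T : SimpleGraph ι) (δ : V → ι)

def pathBag (t : ι) : Set V :=
  {v | ∃ w ∈ cNbhd G v, ∃ p : T.Walk (δ v) (δ w), p.IsPath ∧ t ∈ p.support}

variable {T}

lemma mem_pathBag_self (v : V) : v ∈ pathBag G T δ (δ v) :=
  ⟨v, Set.mem_insert v _, .nil, .nil, SimpleGraph.Walk.start_mem_support _⟩

lemma treeDec_pathBag (hT : T.IsTree) : TreeDec G T (pathBag G T δ) where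
  tree := hT
  cover v := ⟨δ v, mem_pathBag_self G δ v⟩
  edges v w hvw := by
    obtain ⟨p, hp⟩ := hT.1.exists_isPath (δ w) (δ v)
    exact ⟨δ v, mem_pathBag_self G δ v,
      v, Set.mem_insert_of_mem _ hvw.symm, p, hp, p.end_mem_support⟩
  subtree v := by
    classical
    refine (SimpleGraph.connected_iff_exists_forall_reachable _).mpr
      ⟨⟨δ v, mem_pathBag_self G δ v⟩, ?_⟩
    rintro ⟨t, w, hw, p, hp, ht⟩
    have hsupp : ∀ z ∈ (p.takeUntil t ht).support, v ∈ pathBag G T δ z :=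
      fun z hz => ⟨w, hw, p, hp, p.support_takeUntil_subset_support ht hz⟩
    exact ⟨(p.takeUntil t ht).induce _ hsupp⟩

lemma pathBag_subset_cNbhd_of_subsingleton (hδ : δ.Injective) {u : V}
    (hu : (T.neighborSet (δ u)).Subsingleton) : pathBag G T δ (δ u) ⊆ cNbhd G u := by
  rintro v ⟨w, hw, p, hp, ht⟩
  by_cases hv : δ u = δ v
  · rw [hδ hv]
    exact Set.mem_insert v _
  by_cases hw' : δ u = δ w
  · rw [hδ hw']
    exact mem_cNbhd_comm.mp hw
  exact absurd ht (hp.isTrail.not_mem_support_of_subsingleton_neighborSet hv hw' hu)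

lemma exists_adj_of_mem_pathBag (hT : T.IsAcyclic) {t : ι} (ht : ∀ u, δ u ≠ t) {v : V}
    (hv : v ∈ pathBag G T δ t) :
    ∃ a, T.Adj t a ∧ ∃ w, G.Adj v w ∧ (T.deleteEdges {s(a, t)}).Reachable (δ v) a ∧
      ¬ (T.deleteEdges {s(a, t)}).Reachable (δ w) a := by
  obtain ⟨w, hw, p, hp, htp⟩ := hv
  obtain ⟨a, hta, hva, hwa⟩ := hT.exists_adj_deleteEdges_separating hp.isTrail htp (ht v).symm
  rcases hw with rfl | hvw
  · exact absurd hva hwa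
  · exact ⟨a, hta, w, hvw, hva, hwa⟩

lemma exists_card_le_pathBag_subset_biUnion_cNbhd [Fintype V] (hT : T.IsAcyclic) {k : ℕ}
    (hcut : ∀ a b, T.Adj a b → cutrank G {v | (T.deleteEdges {s(a, b)}).Reachable (δ v) a} ≤ k)
    {t : ι} (ht : ∀ u, δ u ≠ t) (hfin : (T.neighborSet t).Finite) :
    ∃ Y : Finset V, Y.card ≤ (T.neighborSet t).ncard * k ∧
      pathBag G T δ t ⊆ ⋃ y ∈ Y, cNbhd G y := by
  classical
  have hside : ∀ a, ∃ Y : Finset V, Y.card ≤ k ∧ (T.Adj t a → ∀ v w, G.Adj v w →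
      (T.deleteEdges {s(a, t)}).Reachable (δ v) a →
      ¬ (T.deleteEdges {s(a, t)}).Reachable (δ w) a → ∃ y ∈ Y, G.Adj v y) := by
    intro a
    by_cases hta : T.Adj t a
    · obtain ⟨Y, hY, hcov⟩ := exists_card_le_cutrank G
        {v | (T.deleteEdges {s(a, t)}).Reachable (δ v) a}
      exact ⟨Y, hY.trans (hcut a t hta.symm), fun _ v w hvw hv hw => hcov v hv w hw hvw⟩
    · exact ⟨∅, by simp, fun h => absurd h hta⟩
  choose Y hYcard hYcov using hside
  refine ⟨hfin.toFinset.biUnion Y, ?_, fun v hv => ?_⟩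
  · rw [Set.ncard_eq_toFinset_card _ hfin]
    exact Finset.card_biUnion_le_card_mul _ _ _ fun a _ => hYcard a
  obtain ⟨a, hta, w, hvw, hva, hwa⟩ := exists_adj_of_mem_pathBag G δ hT ht hv
  obtain ⟨y, hy, hvy⟩ := hYcov a hta v w hvw hva hwa
  exact Set.mem_iUnion₂.mpr ⟨y, Finset.mem_biUnion.mpr ⟨a, hfin.mem_toFinset.mpr hta, hy⟩,
    Set.mem_insert_of_mem _ hvy.symm⟩

end PathBag

theorem stmt19_general [Fintype V] (G : SimpleGraph V) (d k : ℕ) (hk : 0 < k)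
    (halpha : alphaLoc G ≤ d) (hrw : HasRankDecompOfWidth G k) :
    alphaTW G ≤ 3 * d * k := by
  obtain ⟨ι, T, δ, hT, hδ, hleaf, hdeg, hcut⟩ := hrw
  refine Nat.sInf_le ⟨ι, T, pathBag G T δ, treeDec_pathBag G δ hT, fun t S hS hind => ?_⟩
  obtain ⟨Y, hYcard, hY⟩ : ∃ Y : Finset V, Y.card ≤ 3 * k ∧
      pathBag G T δ t ⊆ ⋃ y ∈ Y, cNbhd G y := by
    rcases hdeg t with h1 | h3
    · obtain ⟨u, rfl⟩ := (hleaf _).mp h1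
      have hu : (T.neighborSet (δ u)).Subsingleton := by
        obtain ⟨a, ha⟩ := Set.ncard_eq_one.mp h1
        exact ha ▸ Set.subsingleton_singleton
      exact ⟨{u}, by rw [Finset.card_singleton]; omega, by simpa using pathBag_subset_cNbhd_of_subsingleton G δ hδ hu⟩
    · have ht : ∀ u, δ u ≠ t := fun u hu => by
        have := (hleaf t).mpr ⟨u, hu⟩
        omega
      exact h3 ▸ exists_card_le_pathBag_subset_biUnion_cNbhd G δ hT.isAcyclic hcut ht
        (Set.finite_of_ncard_ne_zero (by omega))
  calc S.ncard ≤ Y.card * alphaLoc G := hind.ncard_le_of_subset_biUnion Y (hS.trans hY)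
    _ ≤ 3 * k * d := Nat.mul_le_mul hYcard halpha
    _ = 3 * d * k := by ring

theorem stmt19 [Fintype V] (G : SimpleGraph V) (d k : ℕ) (hd : 0 < d) (hk : 0 < k)
    (halpha : alphaLoc G ≤ d) (hrw : HasRankDecompOfWidth G k) :
    alphaTW G ≤ 3 * d * k :=
  stmt19_general G d k hk halpha hrw
end
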